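/- If n is a positive integer with KL(n) > 0, then H(n) > 2. -/
import Mathlib


/-- `KL n = ∑_{d ∣ n} d · log (d / (2 φ(d)))`. -/
noncomputable def KL (n : ℕ) : ℝ :=
  ∑ d ∈ n.divisors, (d : ℝ) * Real.log ((d : ℝ) / (2 * (Nat.totient d : ℝ)))

/-- `H n = n / φ(n)`. -/
noncomputable def H (n : ℕ) : ℝ := (n : ℝ) / (Nat.totient n : ℝ)

lemma H_eq_prod (n : ℕ) (hn : 0 < n) :
    H n = ∏ p ∈ n.primeFactors, (p : ℝ) / ((p : ℝ) - 1) := by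
  have key := Nat.totient_mul_prod_primeFactors n
  have hφ : 0 < Nat.totient n := Nat.totient_pos.mpr hn
  have hR : (Nat.totient n : ℝ) * ∏ p ∈ n.primeFactors, (p : ℝ)
      = (n : ℝ) * ∏ p ∈ n.primeFactors, ((p : ℝ) - 1) := by
    have := congrArg (fun k : ℕ => (k : ℝ)) key
    push_cast at this
    rw [this]
    congr 1
    refine Finset.prod_congr rfl fun p hp => ?_
    have hp2 := (Nat.prime_of_mem_primeFactors hp).two_le
    have : (1:ℕ) ≤ p := by omega
    push_cast [Nat.cast_sub this]
    ring
  have hprodne : ∏ p ∈ n.primeFactors, ((p : ℝ) - 1) ≠ 0 := by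
    refine Finset.prod_ne_zero_iff.mpr fun p hp => ?_
    have hp2 := (Nat.prime_of_mem_primeFactors hp).two_le
    have : (2:ℝ) ≤ p := by exact_mod_cast hp2
    linarith
  have hφne : (Nat.totient n : ℝ) ≠ 0 := by positivity
  rw [H, Finset.prod_div_distrib]
  field_simp
  linarith [hR]

lemma H_mono {d n : ℕ} (hd : d ∣ n) (hn : 0 < n) : H d ≤ H n := by
  have hd0 : 0 < d := Nat.pos_of_dvd_of_pos hd hn
  rw [H_eq_prod d hd0, H_eq_prod n hn]
  have hsub : d.primeFactors ⊆ n.primeFactors := Nat.primeFactors_mono hd hn.ne'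
  have hone : ∀ p ∈ n.primeFactors, (1:ℝ) ≤ (p:ℝ)/((p:ℝ)-1) := by
    intro p hp
    have hp2 := (Nat.prime_of_mem_primeFactors hp).two_le
    have h2 : (2:ℝ) ≤ p := by exact_mod_cast hp2
    rw [le_div_iff₀ (by linarith)]
    linarith
  rw [← Finset.prod_sdiff hsub]
  have h1 : (1:ℝ) ≤ ∏ p ∈ n.primeFactors \ d.primeFactors, (p:ℝ)/((p:ℝ)-1) := by
    have := Finset.prod_le_prod (s := n.primeFactors \ d.primeFactors)
      (f := fun _ => (1:ℝ)) (g := fun p : ℕ => (p:ℝ)/((p:ℝ)-1))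
      (fun _ _ => zero_le_one) (fun p hp => hone p (Finset.mem_sdiff.mp hp).1)
    simpa using this
  have h0 : (0:ℝ) ≤ ∏ p ∈ d.primeFactors, (p:ℝ)/((p:ℝ)-1) :=
    Finset.prod_nonneg fun p hp => le_trans zero_le_one (hone p (hsub hp))
  nlinarith

theorem H_gt_two_of_KL_pos (n : ℕ) (hn : 0 < n) (hKL : KL n > 0) :
    H n > 2 := by
  by_contra h
  push_neg at h
  have : KL n ≤ 0 := by
    refine Finset.sum_nonpos fun d hd => ?_
    have hdvd : d ∣ n := Nat.dvd_of_mem_divisors hd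
    have hd0 : 0 < d := Nat.pos_of_mem_divisors hd
    have hφ : 0 < Nat.totient d := Nat.totient_pos.mpr hd0
    have hHd : H d ≤ 2 := le_trans (H_mono hdvd hn) h
    have hle : (d : ℝ) ≤ 2 * (Nat.totient d : ℝ) := by
      have hφR : (0:ℝ) < (Nat.totient d : ℝ) := by exact_mod_cast hφ
      rw [H, div_le_iff₀ hφR] at hHd
      linarith
    have hlog : Real.log ((d : ℝ) / (2 * (Nat.totient d : ℝ))) ≤ 0 := by
      apply Real.log_nonpos
      · positivity
      · rw [div_le_one (by positivity)]
        linarith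
    exact mul_nonpos_of_nonneg_of_nonpos (by positivity) hlog
  linarith
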